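/- Let 0 < τ₂ < τ₁ be reals, let x be a real number, let k ≥ 1 and let r₁, …, r_k be natural numbers with r_j ≥ 1 for every j. Set s_k = r₁ + ⋯ + r_k and m_j = r_j + r_{j+1} + ⋯ + r_k (so m_{k+1} = 0). Then the deformed multinomial coefficients satisfy the recurrence M(x; r₁,…,r_k) = τ₂^{s_k} · M(x−1; r₁,…,r_k) + Σ_{j=1}^{k} τ₁^{x−m_j} · τ₂^{m_{j+1}} · M(x−1; r₁,…,r_{j−1}, r_j−1, r_{j+1},…,r_k). (This is the second recurrence of the paper's Proposition on multinomial coefficients, with the factor τ₂^{m_{j+1}} in place of τ₂^{s_{j−1}} so that the identity holds for all k.) -/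

import Mathlib

open Finset

noncomputable def dnum (τ₁ τ₂ x : ℝ) : ℝ := (τ₁ ^ x - τ₂ ^ x) / (τ₁ - τ₂)

noncomputable def dfac (τ₁ τ₂ : ℝ) (r : ℕ) : ℝ :=
  ∏ j ∈ Finset.range r, dnum τ₁ τ₂ ((j : ℝ) + 1)

noncomputable def dfall (τ₁ τ₂ x : ℝ) (r : ℕ) : ℝ :=
  ∏ i ∈ Finset.range r, dnum τ₁ τ₂ (x - (i : ℝ))

noncomputable def dbinom (τ₁ τ₂ x : ℝ) (r : ℕ) : ℝ := dfall τ₁ τ₂ x r / dfac τ₁ τ₂ r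

noncomputable def dmulti (τ₁ τ₂ x : ℝ) {k : ℕ} (r : Fin k → ℕ) : ℝ :=
  dfall τ₁ τ₂ x (∑ j, r j) / ∏ j, dfac τ₁ τ₂ (r j)

section

variable {τ₁ τ₂ : ℝ}

lemma dnum_pos (hτ₂ : 0 < τ₂) (hττ : τ₂ < τ₁) {x : ℝ} (hx : 0 < x) : 0 < dnum τ₁ τ₂ x := by
  have := Real.rpow_lt_rpow hτ₂.le hττ hx
  exact div_pos (by linarith) (by linarith)

lemma dnum_add (hτ₁ : 0 < τ₁) (hτ₂ : 0 < τ₂) (a b : ℝ) :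
    dnum τ₁ τ₂ (a + b) = τ₂ ^ b * dnum τ₁ τ₂ a + τ₁ ^ a * dnum τ₁ τ₂ b := by
  simp only [dnum, Real.rpow_add hτ₁, Real.rpow_add hτ₂]
  ring

lemma dnum_eq_sum_Ici_Ioi (hτ₁ : 0 < τ₁) (hτ₂ : 0 < τ₂) (x : ℝ) {k : ℕ} (d : Fin k → ℝ) :
    dnum τ₁ τ₂ x = τ₂ ^ (∑ j, d j) * dnum τ₁ τ₂ (x - ∑ j, d j) +
      ∑ j, τ₁ ^ (x - ∑ i ∈ Ici j, d i) * τ₂ ^ (∑ i ∈ Ioi j, d i) * dnum τ₁ τ₂ (d j) := by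
  induction k generalizing x with
  | zero => simp
  | succ k ih =>
    have hrest : dnum τ₁ τ₂ (x - ∑ j : Fin k, d j.succ) =
        τ₂ ^ d 0 * dnum τ₁ τ₂ (x - ∑ j, d j) + τ₁ ^ (x - ∑ j, d j) * dnum τ₁ τ₂ (d 0) := by
      rw [← dnum_add hτ₁ hτ₂, Fin.sum_univ_succ]
      ring_nf
    rw [ih x (fun j => d j.succ), hrest, Fin.sum_univ_succ (fun j => _ * _ * dnum τ₁ τ₂ (d j)),
      Ici_zero_eq_univ, Fin.Ioi_zero_eq_map, sum_map]
    simp only [← Fin.map_succEmb_Ici, ← Fin.map_succEmb_Ioi, sum_map, Fin.coe_succEmb,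
      Fin.sum_univ_succ d, Real.rpow_add hτ₂]
    ring

lemma dfall_succ_eq_dnum_mul (x : ℝ) (n : ℕ) :
    dfall τ₁ τ₂ x (n + 1) = dnum τ₁ τ₂ x * dfall τ₁ τ₂ (x - 1) n := by
  simp only [dfall, prod_range_succ', Nat.cast_add, Nat.cast_one, Nat.cast_zero, sub_zero,
    sub_add_eq_sub_sub_swap]
  ring

lemma dfall_succ (x : ℝ) (n : ℕ) :
    dfall τ₁ τ₂ x (n + 1) = dfall τ₁ τ₂ x n * dnum τ₁ τ₂ (x - n) :=
  prod_range_succ _ _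

lemma dfac_succ (n : ℕ) : dfac τ₁ τ₂ (n + 1) = dfac τ₁ τ₂ n * dnum τ₁ τ₂ (n + 1) :=
  prod_range_succ _ _

lemma sum_update_pred {k : ℕ} (r : Fin k → ℕ) {j : Fin k} (hj : 1 ≤ r j) :
    ∑ i, Function.update r j (r j - 1) i = ∑ i, r i - 1 := by
  rw [sum_update_of_mem (mem_univ j), sum_eq_add_sum_sdiff_singleton_of_mem (mem_univ j) r]
  omega

lemma prod_dfac_update_pred {k : ℕ} (r : Fin k → ℕ) {j : Fin k} (hj : 1 ≤ r j) :
    (∏ i, dfac τ₁ τ₂ (Function.update r j (r j - 1) i)) * dnum τ₁ τ₂ (r j) =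
      ∏ i, dfac τ₁ τ₂ (r i) := by
  obtain ⟨n, hn⟩ := Nat.exists_eq_add_of_le' hj
  simp only [Function.apply_update (fun _ => dfac τ₁ τ₂)]
  rw [prod_update_of_mem (mem_univ j), prod_eq_mul_prod_sdiff_singleton_of_mem (mem_univ j), hn,
    dfac_succ]
  push_cast
  ring

lemma dmulti_update_pred (hτ₂ : 0 < τ₂) (hττ : τ₂ < τ₁) (x : ℝ) {k : ℕ} (r : Fin k → ℕ)
    {j : Fin k} (hj : 1 ≤ r j) :
    dmulti τ₁ τ₂ x (Function.update r j (r j - 1)) =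
      dnum τ₁ τ₂ (r j) * dfall τ₁ τ₂ x (∑ i, r i - 1) / ∏ i, dfac τ₁ τ₂ (r i) := by
  have hpos : 0 < dnum τ₁ τ₂ (r j) := dnum_pos hτ₂ hττ (by exact_mod_cast hj)
  rw [dmulti, sum_update_pred r hj, ← prod_dfac_update_pred r hj]
  field_simp

end

/-- Second recurrence for the deformed multinomial coefficients:
`M(x; r₁,…,r_k) = τ₂^{s_k} M(x−1; r₁,…,r_k)
  + Σ_j τ₁^{x−m_j} τ₂^{m_{j+1}} M(x−1; …, r_j−1, …)`,
where `s_k = r₁+⋯+r_k` and `m_j = r_j+⋯+r_k`. -/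
theorem deformed_multinomial_recurrence_second
    (τ₁ τ₂ : ℝ) (hτ₂ : 0 < τ₂) (hττ : τ₂ < τ₁) (x : ℝ)
    (k : ℕ) (hk : 1 ≤ k) (r : Fin k → ℕ) (hr : ∀ j, 1 ≤ r j) :
    dmulti τ₁ τ₂ x r =
      τ₂ ^ (((∑ j, r j : ℕ) : ℝ)) * dmulti τ₁ τ₂ (x - 1) r +
        ∑ j : Fin k,
          τ₁ ^ (x - ((∑ i ∈ Finset.Ici j, r i : ℕ) : ℝ)) *
            τ₂ ^ (((∑ i ∈ Finset.Ioi j, r i : ℕ) : ℝ)) *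
            dmulti τ₁ τ₂ (x - 1) (Function.update r j (r j - 1)) := by
  obtain ⟨n, hn⟩ : ∃ n, ∑ j, r j = n + 1 :=
    Nat.exists_eq_add_of_le' ((hr ⟨0, hk⟩).trans (single_le_sum (by simp) (mem_univ _)))
  have hsum : ∑ j, (r j : ℝ) = (n : ℝ) + 1 := by exact_mod_cast hn
  simp_rw [dmulti_update_pred hτ₂ hττ (x - 1) r (hr _)]
  rw [dmulti, dmulti, hn, Nat.add_sub_cancel, dfall_succ_eq_dnum_mul, dfall_succ,
    dnum_eq_sum_Ici_Ioi (hτ₂.trans hττ) hτ₂ x (fun j => (r j : ℝ))]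
  simp only [Nat.cast_sum, hsum, Nat.cast_succ, sub_sub, add_comm (1 : ℝ)]
  rw [add_mul, add_div, sum_mul, sum_div]
  congr 1
  · ring
  · exact sum_congr rfl fun j _ => by ring
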